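/- For every (z,σ) ∈ ℝ^N ∖ {(0,0)} with σ ≠ 0, the Finsler Laplacian in the σ-variables of ρ satisfies Δ_Ψ(ρ)(z,σ) = 4(α+1)·k·ρ(z,σ)^{-2α-1} − (2α+1)(4(α+1))² Ψ⁰(σ)² ρ(z,σ)^{-4α-3}. -/

import Mathlib

open Real MeasureTheory
open scoped RealInnerProductSpace

noncomputable section

abbrev Euc (n : ℕ) := EuclideanSpace ℝ (Fin n)

/-- A Minkowski norm on `ℝⁿ`: nonnegative, absolutely homogeneous, with `N²` of class `C²`
away from the origin and strictly convex. -/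
def IsMinkowskiNorm {n : ℕ} (N : Euc n → ℝ) : Prop :=
  (∀ x, 0 ≤ N x) ∧ (∀ (l : ℝ) (x : Euc n), N (l • x) = |l| * N x) ∧
  ContDiffOn ℝ 2 (fun x => (N x) ^ 2) {(0 : Euc n)}ᶜ ∧
  StrictConvexOn ℝ Set.univ (fun x => (N x) ^ 2)

/-- The Legendre transform (dual norm) `N⁰(x) = sup { ⟨x,ξ⟩ : N(ξ) = 1 }`. -/
def dualNorm {n : ℕ} (N : Euc n → ℝ) (x : Euc n) : ℝ :=
  sSup ((fun ξ => ⟪x, ξ⟫) '' {ξ | N ξ = 1})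

variable {m k : ℕ}

/-- The dual anisotropic Minkowski gauge
`ρ(z,σ) = (Φ⁰(z)^{2(α+1)} + 4(α+1)²Ψ⁰(σ)²)^{1/(2(α+1))}`. -/
def rho (α : ℝ) (Φ : Euc m → ℝ) (Ψ : Euc k → ℝ) (x : Euc m × Euc k) : ℝ :=
  (dualNorm Φ x.1 ^ (2 * (α + 1)) + 4 * (α + 1) ^ 2 * dualNorm Ψ x.2 ^ 2) ^ (1 / (2 * (α + 1)))

/-- Gradient in the `z` variables. -/
def gradZ (u : Euc m × Euc k → ℝ) (x : Euc m × Euc k) : Euc m :=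
  gradient (fun z => u (z, x.2)) x.1

/-- Gradient in the `σ` variables. -/
def gradS (u : Euc m × Euc k → ℝ) (x : Euc m × Euc k) : Euc k :=
  gradient (fun σ => u (x.1, σ)) x.2

/-- Divergence in the `z` variables. -/
def divZ (V : Euc m × Euc k → Euc m) (x : Euc m × Euc k) : ℝ :=
  ∑ i, fderiv ℝ (fun z => V (z, x.2) i) x.1 (EuclideanSpace.single i 1)

/-- Divergence in the `σ` variables. -/
def divS (V : Euc m × Euc k → Euc k) (x : Euc m × Euc k) : ℝ :=
  ∑ i, fderiv ℝ (fun σ => V (x.1, σ) i) x.2 (EuclideanSpace.single i 1)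

/-- The Finsler Laplacian in the `z` variables, `Δ_Φ(u) = div_z(Φ(∇_z u) ∇Φ(∇_z u))`. -/
def finslerLapZ (Φ : Euc m → ℝ) (u : Euc m × Euc k → ℝ) (x : Euc m × Euc k) : ℝ :=
  divZ (fun y => Φ (gradZ u y) • gradient Φ (gradZ u y)) x

/-- The Finsler Laplacian in the `σ` variables, `Δ_Ψ(u) = div_σ(Ψ(∇_σ u) ∇Ψ(∇_σ u))`. -/
def finslerLapS (Ψ : Euc k → ℝ) (u : Euc m × Euc k → ℝ) (x : Euc m × Euc k) : ℝ :=
  divS (fun y => Ψ (gradS u y) • gradient Ψ (gradS u y)) x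

/-- The operator `𝓛_{α,p}`. -/
def Lop (α p : ℝ) (Φ : Euc m → ℝ) (Ψ : Euc k → ℝ) (u : Euc m × Euc k → ℝ)
    (x : Euc m × Euc k) : ℝ :=
  divZ (fun y =>
      (Φ (gradZ u y) ^ 2 + dualNorm Φ y.1 ^ (2 * α) / 4 * Ψ (gradS u y) ^ 2) ^ ((p - 2) / 2) •
        (Φ (gradZ u y) • gradient Φ (gradZ u y))) x
  + divS (fun y =>
      (Φ (gradZ u y) ^ 2 + dualNorm Φ y.1 ^ (2 * α) / 4 * Ψ (gradS u y) ^ 2) ^ ((p - 2) / 2) •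
        ((dualNorm Φ y.1 ^ (2 * α) / 4 * Ψ (gradS u y)) • gradient Ψ (gradS u y))) x

/-- The operator `𝓛_{α,2}(u) = Δ_Φ(u) + (Φ⁰(z)^{2α}/4) Δ_Ψ(u)`. -/
def Lop2 (α : ℝ) (Φ : Euc m → ℝ) (Ψ : Euc k → ℝ) (u : Euc m × Euc k → ℝ)
    (x : Euc m × Euc k) : ℝ :=
  finslerLapZ Φ u x + dualNorm Φ x.1 ^ (2 * α) / 4 * finslerLapS Ψ u x

/-!
The dual norm `Ψ⁰` is the support function of the unit sphere `{Ψ = 1}`. Strict convexity of `Ψ²`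
makes the maximiser `ξ(σ)` of `⟪σ, ·⟫` on that sphere unique, hence continuous in `σ`, and then
`∇Ψ⁰(σ) = ξ(σ)` (Danskin). Since `⟪σ, v⟫ ≤ Ψ⁰(σ) Ψ(v)` with equality at the positive multiples of
`ξ(σ)`, the gradient of `Ψ` there is `σ / Ψ⁰(σ)`. So `Ψ(∇_σ ρ) ∇Ψ(∇_σ ρ)` is the radial field
`f(σ) σ` with `f = 4(α+1) S^{r-1}`, `S = ρ^{2(α+1)}`, `r = 1/(2(α+1))`, whose divergence is
`k f + ⟪∇f, σ⟫`.
-/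

open Filter Topology

section Calculus

variable {F : Type*} [NormedAddCommGroup F] [InnerProductSpace ℝ F] [CompleteSpace F]
  {f : F → ℝ} {g x : F}

theorem HasDerivAt.comp_hasGradientAt {φ : ℝ → ℝ} {φ' : ℝ} (hφ : HasDerivAt φ φ' (f x))
    (hf : HasGradientAt f g x) : HasGradientAt (φ ∘ f) (φ' • g) x := by
  rw [hasGradientAt_iff_hasFDerivAt, map_smul]
  exact hφ.comp_hasFDerivAt x hf.hasFDerivAt

theorem HasGradientAt.const_mul (hf : HasGradientAt f g x) (c : ℝ) :
    HasGradientAt (fun y => c * f y) (c • g) x := by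
  rw [hasGradientAt_iff_hasFDerivAt, map_smul]
  exact hf.hasFDerivAt.const_mul c

theorem HasGradientAt.rpow_add_mul_sq (hf : HasGradientAt f g x) (A B q : ℝ)
    (hS : 0 < A + B * f x ^ 2) :
    HasGradientAt (fun y => (A + B * f y ^ 2) ^ q)
      ((q * (A + B * f x ^ 2) ^ (q - 1) * (2 * B * f x)) • g) x := by
  have hφ : HasDerivAt (fun t : ℝ => (A + B * t ^ 2) ^ q)
      (q * (A + B * f x ^ 2) ^ (q - 1) * (2 * B * f x)) (f x) := by
    convert (((hasDerivAt_pow 2 (f x)).const_mul B).const_add A).rpow_const (p := q)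
      (Or.inl hS.ne') using 1
    ring
  exact hφ.comp_hasGradientAt hf

end Calculus

section SupportFun

variable {E : Type*} [NormedAddCommGroup E] [InnerProductSpace ℝ E] {K : Set E} {x ξ : E}

def supportFun (K : Set E) (x : E) : ℝ :=
  sSup ((fun ξ => ⟪x, ξ⟫) '' K)

theorem supportFun_eq_inner (hξ : ξ ∈ K) (hmax : IsMaxOn (fun η => ⟪x, η⟫) K ξ) :
    supportFun K x = ⟪x, ξ⟫ :=
  IsGreatest.csSup_eq ⟨⟨ξ, hξ, rfl⟩, by rintro _ ⟨η, hη, rfl⟩; exact hmax hη⟩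

theorem inner_le_supportFun (hK : IsCompact K) (hξ : ξ ∈ K) : ⟪x, ξ⟫ ≤ supportFun K x :=
  le_csSup ((hK.image (continuous_const.inner continuous_id)).bddAbove) ⟨ξ, hξ, rfl⟩

theorem IsCompact.exists_isMaxOn_inner (hK : IsCompact K) (hne : K.Nonempty) (x : E) :
    ∃ ξ ∈ K, IsMaxOn (fun η => ⟪x, η⟫) K ξ :=
  hK.exists_isMaxOn hne (continuous_const.inner continuous_id).continuousOn

theorem eventually_norm_sub_lt_of_isMaxOn_inner (hK : IsCompact K) (hξ : ξ ∈ K)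
    (hmax : IsMaxOn (fun η => ⟪x, η⟫) K ξ)
    (huniq : ∀ η ∈ K, IsMaxOn (fun ζ => ⟪x, ζ⟫) K η → η = ξ) {ε : ℝ} (hε : 0 < ε) :
    ∀ᶠ y in 𝓝 x, ∀ η ∈ K, IsMaxOn (fun ζ => ⟪y, ζ⟫) K η → ‖η - ξ‖ < ε := by
  set Kε := K ∩ {η | ε ≤ ‖η - ξ‖}
  have hKε : IsCompact Kε :=
    hK.inter_right (isClosed_le continuous_const (continuous_id.sub continuous_const).norm)
  have hfar : ∀ᶠ y in 𝓝 x, ∀ η ∈ Kε, ⟪y, η⟫ < ⟪y, ξ⟫ := by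
    refine hKε.eventually_forall_of_forall_eventually fun η hη => ?_
    have hlt : ⟪x, η⟫ < ⟪x, ξ⟫ := by
      refine (hmax hη.1).lt_of_ne fun heq => ?_
      have hηmax : IsMaxOn (fun ζ => ⟪x, ζ⟫) K η := fun ζ hζ => (hmax hζ).trans heq.ge
      have hfar : ε ≤ ‖η - ξ‖ := hη.2
      rw [huniq η hη.1 hηmax, sub_self, norm_zero] at hfar
      linarith
    have hcont : Continuous fun p : E × E => ⟪p.1, ξ⟫ - ⟪p.1, p.2⟫ := by fun_prop
    filter_upwards [hcont.continuousAt.eventually (lt_mem_nhds (sub_pos.mpr hlt))] with p hp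
    exact sub_pos.mp hp
  filter_upwards [hfar] with y hy η hηK hηmax
  by_contra! hfarη
  exact (hηmax hξ).not_gt (hy η ⟨hηK, hfarη⟩)

theorem hasGradientAt_supportFun [CompleteSpace E] (hK : IsCompact K) (hξ : ξ ∈ K)
    (hmax : IsMaxOn (fun η => ⟪x, η⟫) K ξ)
    (huniq : ∀ η ∈ K, IsMaxOn (fun ζ => ⟪x, ζ⟫) K η → η = ξ) :
    HasGradientAt (supportFun K) ξ x := by
  rw [hasGradientAt_iff_isLittleO, Asymptotics.isLittleO_iff]
  intro c hc
  filter_upwards [eventually_norm_sub_lt_of_isMaxOn_inner hK hξ hmax huniq hc] with y hy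
  obtain ⟨ξy, hξy, hmaxy⟩ := hK.exists_isMaxOn_inner ⟨ξ, hξ⟩ y
  have hΔ : supportFun K y - supportFun K x - ⟪ξ, y - x⟫ = ⟪y, ξy - ξ⟫ := by
    rw [supportFun_eq_inner hξy hmaxy, supportFun_eq_inner hξ hmax, inner_sub_right,
      inner_sub_right, real_inner_comm ξ y, real_inner_comm ξ x]
    ring
  have hlow : 0 ≤ ⟪y, ξy - ξ⟫ := by
    rw [inner_sub_right]; exact sub_nonneg.mpr (hmaxy hξ)
  have hupp : ⟪y, ξy - ξ⟫ ≤ ‖y - x‖ * ‖ξy - ξ‖ := by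
    have hx : ⟪x, ξy - ξ⟫ ≤ 0 := by rw [inner_sub_right]; exact sub_nonpos.mpr (hmax hξy)
    have := real_inner_le_norm (y - x) (ξy - ξ)
    rw [inner_sub_left] at this
    linarith
  rw [hΔ, Real.norm_eq_abs, abs_of_nonneg hlow, mul_comm c]
  exact hupp.trans (mul_le_mul_of_nonneg_left (hy ξy hξy hmaxy).le (norm_nonneg _))

end SupportFun

theorem dualNorm_eq_supportFun {n : ℕ} (N : Euc n → ℝ) : dualNorm N = supportFun {ξ | N ξ = 1} :=
  rfl

namespace IsMinkowskiNorm

variable {n : ℕ} {N : Euc n → ℝ} {x v ξ η : Euc n}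

theorem map_smul_of_nonneg (hN : IsMinkowskiNorm N) {c : ℝ} (hc : 0 ≤ c) (x : Euc n) :
    N (c • x) = c * N x := by
  rw [hN.2.1, abs_of_nonneg hc]

protected theorem map_zero (hN : IsMinkowskiNorm N) : N 0 = 0 := by
  simpa using hN.map_smul_of_nonneg le_rfl 0

protected theorem pos (hN : IsMinkowskiNorm N) (hx : x ≠ 0) : 0 < N x := by
  have h0x : (0 : Euc n) ≠ (2 : ℝ) • x := (smul_ne_zero two_ne_zero hx).symm
  have hstrict := hN.2.2.2.2 (Set.mem_univ _) (Set.mem_univ _) h0x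
    (by norm_num : (0 : ℝ) < 1 / 2) (by norm_num : (0 : ℝ) < 1 / 2) (by norm_num)
  have hmid : (1 / 2 : ℝ) • (0 : Euc n) + (1 / 2 : ℝ) • ((2 : ℝ) • x) = x := by
    rw [smul_zero, zero_add, smul_smul]; norm_num
  dsimp only at hstrict
  rw [hmid, hN.map_zero, hN.map_smul_of_nonneg zero_le_two, smul_eq_mul, smul_eq_mul] at hstrict
  exact (hN.1 x).lt_of_ne' fun h => by rw [h] at hstrict; norm_num at hstrict

protected theorem continuous (hN : IsMinkowskiNorm N) : Continuous N := by
  have hsq : Continuous fun x => N x ^ 2 :=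
    continuousOn_univ.mp (hN.2.2.2.convexOn.continuousOn isOpen_univ)
  simpa only [Real.sqrt_sq (hN.1 _)] using hsq.sqrt

protected theorem differentiableAt (hN : IsMinkowskiNorm N) (hx : x ≠ 0) :
    DifferentiableAt ℝ N x := by
  have hsq : DifferentiableAt ℝ (fun x => N x ^ 2) x :=
    (hN.2.2.1.contDiffAt (isOpen_compl_singleton.mem_nhds hx)).differentiableAt (by norm_num)
  have := hsq.sqrt (pow_pos (hN.pos hx) 2).ne'
  simpa only [Real.sqrt_sq (hN.1 _)] using this

theorem exists_pos_mul_norm_le (hN : IsMinkowskiNorm N) : ∃ μ > 0, ∀ x, μ * ‖x‖ ≤ N x := by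
  rcases subsingleton_or_nontrivial (Euc n) with _ | _
  · exact ⟨1, one_pos, fun x => by simpa [Subsingleton.elim x 0] using hN.1 x⟩
  obtain ⟨w, hw, hmin⟩ := (isCompact_sphere (0 : Euc n) 1).exists_isMinOn
    (NormedSpace.sphere_nonempty.mpr zero_le_one) hN.continuous.continuousOn
  have hw0 : w ≠ 0 := ne_zero_of_mem_unit_sphere ⟨w, hw⟩
  refine ⟨N w, hN.pos hw0, fun x => ?_⟩
  rcases eq_or_ne x 0 with rfl | hx
  · simp [hN.map_zero]
  have hxpos : 0 < ‖x‖ := norm_pos_iff.mpr hx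
  have hmem : ‖x‖⁻¹ • x ∈ Metric.sphere (0 : Euc n) 1 := by
    simp [norm_smul, hxpos.ne']
  have : N w ≤ N (‖x‖⁻¹ • x) := hmin hmem
  rw [hN.map_smul_of_nonneg (inv_nonneg.mpr hxpos.le)] at this
  rwa [le_inv_mul_iff₀ hxpos, mul_comm] at this

theorem isCompact_unitSphere (hN : IsMinkowskiNorm N) : IsCompact {ξ | N ξ = 1} := by
  obtain ⟨μ, hμ, hle⟩ := hN.exists_pos_mul_norm_le
  refine Metric.isCompact_of_isClosed_isBounded (isClosed_eq hN.continuous continuous_const) ?_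
  refine (Metric.isBounded_closedBall (x := 0) (r := μ⁻¹)).subset fun ξ hξ => ?_
  rw [mem_closedBall_zero_iff, ← mul_one μ⁻¹, le_inv_mul_iff₀ hμ]
  exact (hle ξ).trans_eq hξ

theorem inv_smul_mem_unitSphere (hN : IsMinkowskiNorm N) (hx : x ≠ 0) :
    (N x)⁻¹ • x ∈ {ξ | N ξ = 1} := by
  have hpos := hN.pos hx
  show N _ = 1
  rw [hN.map_smul_of_nonneg (inv_nonneg.mpr hpos.le), inv_mul_cancel₀ hpos.ne']

theorem inner_le_dualNorm_mul (hN : IsMinkowskiNorm N) (x v : Euc n) :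
    ⟪x, v⟫ ≤ dualNorm N x * N v := by
  rcases eq_or_ne v 0 with rfl | hv
  · simp [hN.map_zero]
  have hpos := hN.pos hv
  have := inner_le_supportFun (x := x) hN.isCompact_unitSphere (hN.inv_smul_mem_unitSphere hv)
  rw [real_inner_smul_right, ← dualNorm_eq_supportFun, inv_mul_le_iff₀ hpos, mul_comm] at this
  exact this

theorem dualNorm_pos (hN : IsMinkowskiNorm N) (hx : x ≠ 0) : 0 < dualNorm N x := by
  have := hN.inner_le_dualNorm_mul x x
  rw [real_inner_self_eq_norm_sq] at this
  exact pos_of_mul_pos_left ((pow_pos (norm_pos_iff.mpr hx) 2).trans_le this) (hN.pos hx).le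

theorem dualNorm_nonneg (hN : IsMinkowskiNorm N) (x : Euc n) : 0 ≤ dualNorm N x := by
  rcases eq_or_ne x 0 with rfl | hx
  · exact Real.sSup_nonneg (by rintro _ ⟨ξ, -, rfl⟩; simp)
  · exact (hN.dualNorm_pos hx).le

theorem eq_of_isMaxOn_inner (hN : IsMinkowskiNorm N) (hx : x ≠ 0) (hξ : ξ ∈ {ξ | N ξ = 1})
    (hη : η ∈ {ξ | N ξ = 1}) (hξmax : IsMaxOn (fun ζ => ⟪x, ζ⟫) {ξ | N ξ = 1} ξ)
    (hηmax : IsMaxOn (fun ζ => ⟪x, ζ⟫) {ξ | N ξ = 1} η) : η = ξ := by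
  by_contra hne
  set w : Euc n := (1 / 2 : ℝ) • η + (1 / 2 : ℝ) • ξ
  have hNw : N w < 1 := by
    have hstrict : N w ^ 2 < 1 / 2 * N η ^ 2 + 1 / 2 * N ξ ^ 2 :=
      hN.2.2.2.2 (Set.mem_univ η) (Set.mem_univ ξ) hne
        (by norm_num : (0 : ℝ) < 1 / 2) (by norm_num : (0 : ℝ) < 1 / 2) (by norm_num)
    rw [show N η = 1 from hη, show N ξ = 1 from hξ] at hstrict
    nlinarith [hN.1 w]
  have hD : ⟪x, w⟫ = dualNorm N x := by
    rw [inner_add_right, real_inner_smul_right, real_inner_smul_right,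
      ← supportFun_eq_inner hξ hξmax, ← supportFun_eq_inner hη hηmax, dualNorm_eq_supportFun]
    ring
  have hle := hN.inner_le_dualNorm_mul x w
  nlinarith [hN.dualNorm_pos hx]

theorem hasGradientAt_dualNorm (hN : IsMinkowskiNorm N) (hx : x ≠ 0) (hξ : ξ ∈ {ξ | N ξ = 1})
    (hmax : IsMaxOn (fun ζ => ⟪x, ζ⟫) {ξ | N ξ = 1} ξ) : HasGradientAt (dualNorm N) ξ x :=
  hasGradientAt_supportFun hN.isCompact_unitSphere hξ hmax
    fun _ hη hηmax => hN.eq_of_isMaxOn_inner hx hξ hη hmax hηmax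

/-- Equality in `⟪x, v⟫ ≤ N⁰(x) N(v)` makes `v` a minimum of `N⁰(x) N - ⟪x, ·⟫`. -/
theorem gradient_eq_of_inner_eq (hN : IsMinkowskiNorm N) (hx : x ≠ 0) (hv : v ≠ 0)
    (heq : ⟪x, v⟫ = dualNorm N x * N v) : gradient N v = (dualNorm N x)⁻¹ • x := by
  set D := dualNorm N x
  have hmin : IsMinOn (fun w => D * N w - ⟪x, w⟫) Set.univ v := fun w _ => by
    have : ⟪x, w⟫ ≤ D * N w := hN.inner_le_dualNorm_mul x w
    show D * N v - ⟪x, v⟫ ≤ D * N w - ⟪x, w⟫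
    linarith
  have hderiv : HasFDerivAt (fun w => D * N w - ⟪x, w⟫)
      (InnerProductSpace.toDual ℝ (Euc n) (D • gradient N v - x)) v := by
    rw [map_sub, map_smul]
    exact ((hN.differentiableAt hv).hasGradientAt.hasFDerivAt.const_mul D).sub
      (InnerProductSpace.toDual ℝ (Euc n) x).hasFDerivAt
  have hzero := (hmin.isLocalMin univ_mem).hasFDerivAt_eq_zero hderiv
  rw [LinearIsometryEquiv.map_eq_zero_iff, sub_eq_zero] at hzero
  rw [eq_inv_smul_iff₀ (hN.dualNorm_pos hx).ne', hzero]

end IsMinkowskiNorm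

section Divergence

theorem divS_congr {V W : Euc m × Euc k → Euc k} {x : Euc m × Euc k}
    (h : ∀ᶠ σ in 𝓝 x.2, V (x.1, σ) = W (x.1, σ)) : divS V x = divS W x :=
  Finset.sum_congr rfl fun i _ => by
    rw [EventuallyEq.fderiv_eq (h.mono fun σ hσ => congrArg (· i) hσ)]

theorem divS_smul_snd {f : Euc k → ℝ} {g : Euc k} {x : Euc m × Euc k}
    (hf : HasGradientAt f g x.2) : divS (fun y => f y.2 • y.2) x = k * f x.2 + ⟪g, x.2⟫ := by
  have hterm : ∀ i, fderiv ℝ (fun σ => (f σ • σ) i) x.2 (EuclideanSpace.single i 1) =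
      f x.2 + g i * x.2 i := by
    intro i
    have hprod : HasFDerivAt (fun σ : Euc k => f σ * σ i) _ x.2 :=
      hf.hasFDerivAt.mul (EuclideanSpace.proj (𝕜 := ℝ) i).hasFDerivAt
    simp only [PiLp.smul_apply, smul_eq_mul]
    rw [hprod.fderiv]
    simp [EuclideanSpace.inner_single_right, mul_comm]
  rw [divS, Finset.sum_congr rfl fun i _ => hterm i, Finset.sum_add_distrib]
  simp [PiLp.inner_apply, mul_comm]

end Divergence

section Gauge

variable {α : ℝ} {Φ : Euc m → ℝ} {Ψ : Euc k → ℝ} {x : Euc m × Euc k}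

def gaugeBase (α : ℝ) (Φ : Euc m → ℝ) (Ψ : Euc k → ℝ) (x : Euc m × Euc k) : ℝ :=
  dualNorm Φ x.1 ^ (2 * (α + 1)) + 4 * (α + 1) ^ 2 * dualNorm Ψ x.2 ^ 2

theorem rho_eq_gaugeBase_rpow : rho α Φ Ψ x = gaugeBase α Φ Ψ x ^ (1 / (2 * (α + 1))) := rfl

theorem gaugeBase_pos (hα : α + 1 ≠ 0) (hΦ : IsMinkowskiNorm Φ) (hΨ : IsMinkowskiNorm Ψ)
    (hσ : x.2 ≠ 0) : 0 < gaugeBase α Φ Ψ x := by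
  have := hΨ.dualNorm_pos hσ
  have := rpow_nonneg (hΦ.dualNorm_nonneg x.1) (2 * (α + 1))
  unfold gaugeBase
  positivity

theorem rho_rpow (hΦ : IsMinkowskiNorm Φ) (p : ℝ) :
    rho α Φ Ψ x ^ p = gaugeBase α Φ Ψ x ^ (p / (2 * (α + 1))) := by
  have := rpow_nonneg (hΦ.dualNorm_nonneg x.1) (2 * (α + 1))
  have hbase : 0 ≤ gaugeBase α Φ Ψ x := by unfold gaugeBase; positivity
  rw [rho_eq_gaugeBase_rpow, ← rpow_mul hbase, one_div_mul_eq_div]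

theorem hasGradientAt_gaugeBase_rpow (hα : α + 1 ≠ 0) (hΦ : IsMinkowskiNorm Φ)
    (hΨ : IsMinkowskiNorm Ψ) (hσ : x.2 ≠ 0) {ξ : Euc k} (hξ : ξ ∈ {ξ | Ψ ξ = 1})
    (hmax : IsMaxOn (fun ζ => ⟪x.2, ζ⟫) {ξ | Ψ ξ = 1} ξ) (q : ℝ) :
    HasGradientAt (fun σ => gaugeBase α Φ Ψ (x.1, σ) ^ q)
      ((q * gaugeBase α Φ Ψ x ^ (q - 1) * (8 * (α + 1) ^ 2 * dualNorm Ψ x.2)) • ξ) x.2 := by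
  convert (hΨ.hasGradientAt_dualNorm hσ hξ hmax).rpow_add_mul_sq
    (dualNorm Φ x.1 ^ (2 * (α + 1))) (4 * (α + 1) ^ 2) q (gaugeBase_pos hα hΦ hΨ hσ) using 2 <;>
    simp only [gaugeBase]
  ring

theorem smul_gradient_gradS_rho (hα : 0 < α + 1) (hΦ : IsMinkowskiNorm Φ)
    (hΨ : IsMinkowskiNorm Ψ) (hσ : x.2 ≠ 0) :
    Ψ (gradS (rho α Φ Ψ) x) • gradient Ψ (gradS (rho α Φ Ψ) x) =
      (4 * (α + 1) * gaugeBase α Φ Ψ x ^ (1 / (2 * (α + 1)) - 1)) • x.2 := by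
  obtain ⟨ξ, hξ, hmax⟩ :=
    hΨ.isCompact_unitSphere.exists_isMaxOn_inner ⟨_, hΨ.inv_smul_mem_unitSphere hσ⟩ x.2
  set c := 1 / (2 * (α + 1)) * gaugeBase α Φ Ψ x ^ (1 / (2 * (α + 1)) - 1) *
    (8 * (α + 1) ^ 2 * dualNorm Ψ x.2)
  have hgrad : gradS (rho α Φ Ψ) x = c • ξ :=
    (hasGradientAt_gaugeBase_rpow hα.ne' hΦ hΨ hσ hξ hmax _).gradient
  have hc : 0 < c := by
    have := gaugeBase_pos hα.ne' hΦ hΨ hσ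
    have := hΨ.dualNorm_pos hσ
    positivity
  have hΨc : Ψ (c • ξ) = c := by rw [hΨ.map_smul_of_nonneg hc.le, show Ψ ξ = 1 from hξ, mul_one]
  have hξ0 : ξ ≠ 0 := by
    rintro rfl
    exact zero_ne_one (hΨ.map_zero.symm.trans hξ)
  have hgradΨ : gradient Ψ (c • ξ) = (dualNorm Ψ x.2)⁻¹ • x.2 := by
    refine hΨ.gradient_eq_of_inner_eq hσ (smul_ne_zero hc.ne' hξ0) ?_
    rw [hΨc, real_inner_smul_right, ← supportFun_eq_inner hξ hmax, dualNorm_eq_supportFun, mul_comm]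
  rw [hgrad, hΨc, hgradΨ, smul_smul]
  congr 1
  simp only [c]
  have hD := (hΨ.dualNorm_pos hσ).ne'
  field_simp
  ring

end Gauge

theorem finsler_laplacian_s_of_rho_general (m k : ℕ) (α : ℝ) (hα : 0 < α)
    (Φ : Euc m → ℝ) (Ψ : Euc k → ℝ) (hΦ : IsMinkowskiNorm Φ) (hΨ : IsMinkowskiNorm Ψ) :
    ∀ x : Euc m × Euc k, x ≠ 0 → x.2 ≠ 0 →
      finslerLapS Ψ (rho α Φ Ψ) x =
        4 * (α + 1) * (k : ℝ) * rho α Φ Ψ x ^ (-(2 * α) - 1)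
        - (2 * α + 1) * (4 * (α + 1)) ^ 2 * dualNorm Ψ x.2 ^ 2 *
            rho α Φ Ψ x ^ (-(4 * α) - 3) := by
  intro x _ hσ
  have hα1 : 0 < α + 1 := by linarith
  set f : Euc k → ℝ := fun σ => 4 * (α + 1) * gaugeBase α Φ Ψ (x.1, σ) ^ (1 / (2 * (α + 1)) - 1)
  obtain ⟨ξ, hξ, hmax⟩ :=
    hΨ.isCompact_unitSphere.exists_isMaxOn_inner ⟨_, hΨ.inv_smul_mem_unitSphere hσ⟩ x.2
  have hlap : finslerLapS Ψ (rho α Φ Ψ) x = divS (fun y => f y.2 • y.2) x := by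
    refine divS_congr ?_
    filter_upwards [isOpen_compl_singleton.mem_nhds hσ] with σ hσ'
    exact smul_gradient_gradS_rho (x := (x.1, σ)) hα1 hΦ hΨ hσ'
  have hf : HasGradientAt f _ x.2 :=
    (hasGradientAt_gaugeBase_rpow hα1.ne' hΦ hΨ hσ hξ hmax _).const_mul (4 * (α + 1))
  have hexp₁ : 1 / (2 * (α + 1)) - 1 = (-(2 * α) - 1) / (2 * (α + 1)) := by field_simp; ring
  have hexp₂ : (-(2 * α) - 1) / (2 * (α + 1)) - 1 = (-(4 * α) - 3) / (2 * (α + 1)) := by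
    field_simp; ring
  rw [hlap, divS_smul_snd hf, real_inner_smul_left, real_inner_comm, real_inner_smul_right,
    ← supportFun_eq_inner hξ hmax, ← dualNorm_eq_supportFun, rho_rpow hΦ, rho_rpow hΦ]
  simp only [f, Prod.mk.eta, hexp₁, hexp₂]
  field_simp
  ring

/-- `Δ_Ψ(ρ) = 4(α+1)·k·ρ^{-2α-1} − (2α+1)(4(α+1))² Ψ⁰(σ)² ρ^{-4α-3}` for `σ ≠ 0`. -/
theorem finsler_laplacian_s_of_rho (m k : ℕ) (hm : 1 ≤ m) (hk : 1 ≤ k) (α : ℝ) (hα : 0 < α)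
    (Φ : Euc m → ℝ) (Ψ : Euc k → ℝ) (hΦ : IsMinkowskiNorm Φ) (hΨ : IsMinkowskiNorm Ψ) :
    ∀ x : Euc m × Euc k, x ≠ 0 → x.2 ≠ 0 →
      finslerLapS Ψ (rho α Φ Ψ) x =
        4 * (α + 1) * (k : ℝ) * rho α Φ Ψ x ^ (-(2 * α) - 1)
        - (2 * α + 1) * (4 * (α + 1)) ^ 2 * dualNorm Ψ x.2 ^ 2 *
            rho α Φ Ψ x ^ (-(4 * α) - 3) :=
  finsler_laplacian_s_of_rho_general m k α hα Φ Ψ hΦ hΨ
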